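/- arXiv:1312.0925 — 4 statements merged into one kernel-verified Lean document; each statement's English description precedes it below -/
import Mathlib

section
/- (Local convergence of noisy subspace iteration.) Let A be a symmetric n×n real matrix with spectral decomposition A = UΛ_U Uᵀ + VΛ_V Vᵀ (U ∈ ℝ^{n×k}, V ∈ ℝ^{n×(n−k)} orthonormal, σ₁ ≥ … ≥ σ_n the absolute eigenvalues in non-increasing order). Consider the noisy subspace iteration: starting from an orthonormal X₀ ∈ ℝ^{n×k}, for ℓ = 1,…,L set Y_ℓ = A X_{ℓ−1} + G_ℓ and let X_ℓ be an orthonormal basis for the column span of Y_ℓ. Let 0 ≤ ε ≤ 1/4, Δ = max_{1≤ℓ≤L} ‖G_ℓ‖, and γ_k = 1 − σ_{k+1}/σ_k. Assume ‖Vᵀ X₀‖ ≤ 1/4 and σ_k ≥ 8Δ/(γ_k ε). Then ‖Vᵀ X_L‖ ≤ max{ ε, 2‖Vᵀ X₀‖ · exp(−γ_k L / 2) }. -/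
open Matrix

/-- The spectral (operator) norm of a real matrix. -/
noncomputable def specNorm {m n : Type*} [Fintype m] [Fintype n] [DecidableEq n]
    (A : Matrix m n ℝ) : ℝ :=
  ‖LinearMap.toContinuousLinearMap (Matrix.toEuclideanLin A)‖

/-!
We follow the tangent `t_ℓ` of the largest principal angle between `span U` and `span X_ℓ`
instead of its sine: the tangent depends only on the column span, so orthonormalising `Y_ℓ`
costs nothing. While `t_ℓ ≤ 1/2`, every `v` has `‖v‖ ≤ (5/4) ‖Uᵀ X_ℓ v‖`, so the noise moves
both components of `Y_ℓ v` by at most `(5/4) Δ ‖Uᵀ X_ℓ v‖`, and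
`t_{ℓ+1} ≤ (σ_{k+1} t_ℓ + 5Δ/4) / (σ_k - 5Δ/4)`. The gap condition makes this at most
`max ε ((1 - γ/2) t_ℓ)`, which the envelope `max ε (2 sin θ_0 e^{-γℓ/2})` dominates because
`1 - γ/2 ≤ e^{-γ/2}`; it starts above `t_0` since `sin θ_0 ≤ 1/4` gives `t_0 ≤ 2 sin θ_0`, and at
the end `sin ≤ tan`.
-/

namespace NoisySubspaceIteration

local notation "‖" x "‖₂" => ‖WithLp.toLp 2 x‖

section EuclideanNorm

variable {ι κ : Type*} [Fintype ι] [Fintype κ]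

theorem norm_toLp_sq (x : ι → ℝ) : ‖x‖₂ ^ 2 = x ⬝ᵥ x := by
  rw [EuclideanSpace.real_norm_sq_eq]
  simp [dotProduct, sq]

theorem dotProduct_mulVec_self (M : Matrix ι κ ℝ) (w : κ → ℝ) :
    (M *ᵥ w) ⬝ᵥ (M *ᵥ w) = w ⬝ᵥ ((Mᵀ * M) *ᵥ w) := by
  rw [dotProduct_mulVec, vecMul_mulVec, dotProduct_mulVec]

theorem norm_mulVec_le_specNorm [DecidableEq κ] (M : Matrix ι κ ℝ) (x : κ → ℝ) :
    ‖M *ᵥ x‖₂ ≤ specNorm M * ‖x‖₂ :=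
  (LinearMap.toContinuousLinearMap (toEuclideanLin M)).le_opNorm (WithLp.toLp 2 x)

theorem specNorm_le_of_forall_norm_mulVec_le [DecidableEq κ] {M : Matrix ι κ ℝ} {c : ℝ}
    (hc : 0 ≤ c) (h : ∀ x, ‖M *ᵥ x‖₂ ≤ c * ‖x‖₂) : specNorm M ≤ c :=
  ContinuousLinearMap.opNorm_le_bound _ hc fun x => h x.ofLp

theorem norm_mulVec_of_transpose_mul_self [DecidableEq κ] {M : Matrix ι κ ℝ} (hM : Mᵀ * M = 1)
    (x : κ → ℝ) : ‖M *ᵥ x‖₂ = ‖x‖₂ := by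
  rw [← sq_eq_sq₀ (norm_nonneg _) (norm_nonneg _), norm_toLp_sq, norm_toLp_sq,
    dotProduct_mulVec_self, hM, one_mulVec]

variable [DecidableEq ι]

theorem norm_diagonal_mulVec_sq (d x : ι → ℝ) :
    ‖diagonal d *ᵥ x‖₂ ^ 2 = ∑ i, d i ^ 2 * x i ^ 2 := by
  simp only [EuclideanSpace.real_norm_sq_eq, mulVec_diagonal, mul_pow]

theorem norm_diagonal_mulVec_le {d : ι → ℝ} {c : ℝ} (hc : 0 ≤ c) (hd : ∀ i, |d i| ≤ c)
    (x : ι → ℝ) : ‖diagonal d *ᵥ x‖₂ ≤ c * ‖x‖₂ := by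
  refine (pow_le_pow_iff_left₀ (norm_nonneg _) (by positivity) two_ne_zero).1 ?_
  rw [norm_diagonal_mulVec_sq, mul_pow, EuclideanSpace.real_norm_sq_eq, Finset.mul_sum]
  refine Finset.sum_le_sum fun i _ => mul_le_mul_of_nonneg_right ?_ (sq_nonneg _)
  exact sq_le_sq.2 (by rw [abs_of_nonneg hc]; exact hd i)

theorem mul_norm_le_norm_diagonal_mulVec {d : ι → ℝ} {c : ℝ} (hc : 0 ≤ c)
    (hd : ∀ i, c ≤ |d i|) (x : ι → ℝ) : c * ‖x‖₂ ≤ ‖diagonal d *ᵥ x‖₂ := by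
  refine (pow_le_pow_iff_left₀ (by positivity) (norm_nonneg _) two_ne_zero).1 ?_
  rw [norm_diagonal_mulVec_sq, mul_pow, EuclideanSpace.real_norm_sq_eq, Finset.mul_sum]
  refine Finset.sum_le_sum fun i _ => mul_le_mul_of_nonneg_right ?_ (sq_nonneg _)
  exact sq_le_sq.2 (by rw [abs_of_nonneg hc]; exact hd i)

end EuclideanNorm

section PrincipalAngles

variable {ι κ κ' μ : Type*} [Fintype ι] [Fintype κ] [Fintype κ'] [Fintype μ]
  {U : Matrix ι κ ℝ} {V : Matrix ι κ' ℝ}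

theorem norm_sq_add_norm_sq_of_mul_transpose_add [DecidableEq ι] (hUV : U * Uᵀ + V * Vᵀ = 1)
    (w : ι → ℝ) :
    ‖Uᵀ *ᵥ w‖₂ ^ 2 + ‖Vᵀ *ᵥ w‖₂ ^ 2 = ‖w‖₂ ^ 2 := by
  rw [norm_toLp_sq, norm_toLp_sq, norm_toLp_sq, dotProduct_mulVec_self, dotProduct_mulVec_self,
    transpose_transpose, transpose_transpose, ← dotProduct_add, ← add_mulVec, hUV, one_mulVec]

theorem norm_transpose_mulVec_le [DecidableEq ι] (hUV : U * Uᵀ + V * Vᵀ = 1) (w : ι → ℝ) :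
    ‖Uᵀ *ᵥ w‖₂ ≤ ‖w‖₂ := by
  refine (pow_le_pow_iff_left₀ (norm_nonneg _) (norm_nonneg _) two_ne_zero).1 ?_
  rw [← norm_sq_add_norm_sq_of_mul_transpose_add hUV w]
  exact le_add_of_nonneg_right (sq_nonneg _)

theorem transpose_mul_add_mul_transpose [DecidableEq κ] (hU : Uᵀ * U = 1) (hUV : Uᵀ * V = 0)
    (D : Matrix κ κ ℝ) (D' : Matrix κ' κ' ℝ) : Uᵀ * (U * D * Uᵀ + V * D' * Vᵀ) = D * Uᵀ := by
  simp only [Matrix.mul_add, ← Matrix.mul_assoc, hU, hUV, Matrix.one_mul, Matrix.zero_mul,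
    add_zero]

/-- For orthonormal `X`, and `U`, `V` orthonormal bases of complementary subspaces, this says
that `t` bounds the tangent of the largest principal angle between the spans of `U` and `X`. -/
def TanAngleLE (U : Matrix ι κ ℝ) (V : Matrix ι κ' ℝ) (X : Matrix ι μ ℝ) (t : ℝ) : Prop :=
  ∀ v, ‖(Vᵀ * X) *ᵥ v‖₂ ≤ t * ‖(Uᵀ * X) *ᵥ v‖₂

theorem tanAngleLE_two_mul_specNorm [DecidableEq ι] [DecidableEq μ] {X : Matrix ι μ ℝ}
    (hUV : U * Uᵀ + V * Vᵀ = 1) (hX : Xᵀ * X = 1) (hs : specNorm (Vᵀ * X) ≤ 1 / 2) :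
    TanAngleLE U V X (2 * specNorm (Vᵀ * X)) := by
  intro v
  have hs0 : 0 ≤ specNorm (Vᵀ * X) := norm_nonneg _
  have hpyth := norm_sq_add_norm_sq_of_mul_transpose_add hUV (X *ᵥ v)
  rw [mulVec_mulVec, mulVec_mulVec, norm_mulVec_of_transpose_mul_self hX] at hpyth
  have hV := pow_le_pow_left₀ (norm_nonneg _) (norm_mulVec_le_specNorm (Vᵀ * X) v) 2
  refine (pow_le_pow_iff_left₀ (norm_nonneg _) (by positivity) two_ne_zero).1 ?_
  nlinarith [mul_le_mul_of_nonneg_right (pow_le_pow_left₀ hs0 hs 2)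
    (sq_nonneg ‖(Vᵀ * X) *ᵥ v‖₂)]

theorem transpose_mul_mul_add_mulVec [DecidableEq κ] {A : Matrix ι ι ℝ} {d : κ → ℝ}
    (hUA : Uᵀ * A = diagonal d * Uᵀ) (X G : Matrix ι μ ℝ) (v : μ → ℝ) :
    (Uᵀ * (A * X + G)) *ᵥ v = diagonal d *ᵥ ((Uᵀ * X) *ᵥ v) + Uᵀ *ᵥ (G *ᵥ v) := by
  rw [Matrix.mul_add, ← Matrix.mul_assoc, hUA, add_mulVec, mulVec_mulVec, mulVec_mulVec,
    Matrix.mul_assoc]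

namespace TanAngleLE

variable {X : Matrix ι μ ℝ} {t : ℝ}

theorem mono (h : TanAngleLE U V X t) {t' : ℝ} (ht : t ≤ t') : TanAngleLE U V X t' :=
  fun v => (h v).trans (mul_le_mul_of_nonneg_right ht (norm_nonneg _))

theorem mul_right (h : TanAngleLE U V X t) {ν : Type*} [Fintype ν] (C : Matrix μ ν ℝ) :
    TanAngleLE U V (X * C) t := by
  intro v
  simpa only [← Matrix.mul_assoc, ← mulVec_mulVec] using h (C *ᵥ v)

theorem norm_le [DecidableEq ι] [DecidableEq μ] (h : TanAngleLE U V X t)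
    (hUV : U * Uᵀ + V * Vᵀ = 1) (hX : Xᵀ * X = 1) {c : ℝ} (hc : 0 ≤ c)
    (htc : 1 + t ^ 2 ≤ c ^ 2) (v : μ → ℝ) :
    ‖v‖₂ ≤ c * ‖(Uᵀ * X) *ᵥ v‖₂ := by
  have hpyth := norm_sq_add_norm_sq_of_mul_transpose_add hUV (X *ᵥ v)
  rw [mulVec_mulVec, mulVec_mulVec, norm_mulVec_of_transpose_mul_self hX] at hpyth
  have hV := pow_le_pow_left₀ (norm_nonneg _) (h v) 2
  refine (pow_le_pow_iff_left₀ (norm_nonneg _) (by positivity) two_ne_zero).1 ?_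
  nlinarith [mul_le_mul_of_nonneg_right htc (sq_nonneg ‖(Uᵀ * X) *ᵥ v‖₂)]

theorem specNorm_le [DecidableEq ι] [DecidableEq μ] (h : TanAngleLE U V X t)
    (hUV : U * Uᵀ + V * Vᵀ = 1) (hX : Xᵀ * X = 1) (ht : 0 ≤ t) : specNorm (Vᵀ * X) ≤ t := by
  refine specNorm_le_of_forall_norm_mulVec_le ht fun v => (h v).trans ?_
  gcongr
  rw [← mulVec_mulVec, ← norm_mulVec_of_transpose_mul_self hX v]
  exact norm_transpose_mulVec_le hUV _

theorem noisy_power_step [DecidableEq ι] [DecidableEq κ] [DecidableEq κ'] [DecidableEq μ]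
    {A : Matrix ι ι ℝ} {G : Matrix ι μ ℝ} {dU : κ → ℝ} {dV : κ' → ℝ} {σ σ' Δ c t' : ℝ}
    (h : TanAngleLE U V X t) (hUV : U * Uᵀ + V * Vᵀ = 1)
    (hUA : Uᵀ * A = diagonal dU * Uᵀ) (hVA : Vᵀ * A = diagonal dV * Vᵀ)
    (hσ : 0 ≤ σ) (hdU : ∀ i, σ ≤ |dU i|) (hσ' : 0 ≤ σ') (hdV : ∀ j, |dV j| ≤ σ')
    (hG : specNorm G ≤ Δ) (hc : ∀ v, ‖v‖₂ ≤ c * ‖(Uᵀ * X) *ᵥ v‖₂)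
    (ht' : σ' * t + c * Δ ≤ t' * (σ - c * Δ)) (ht'0 : 0 ≤ t') :
    TanAngleLE U V (A * X + G) t' := by
  intro v
  set a := ‖(Uᵀ * X) *ᵥ v‖₂
  have hΔ : 0 ≤ Δ := (norm_nonneg _).trans hG
  have hnoise : ‖G *ᵥ v‖₂ ≤ c * Δ * a :=
    calc ‖G *ᵥ v‖₂ ≤ Δ * ‖v‖₂ := (norm_mulVec_le_specNorm G v).trans (by gcongr)
      _ ≤ Δ * (c * a) := by gcongr; exact hc v
      _ = c * Δ * a := by ring
  have hVU : V * Vᵀ + U * Uᵀ = 1 := by rwa [add_comm]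
  have hUY : (σ - c * Δ) * a ≤ ‖(Uᵀ * (A * X + G)) *ᵥ v‖₂ := by
    rw [transpose_mul_mul_add_mulVec hUA, WithLp.toLp_add]
    have := norm_le_add_norm_add (WithLp.toLp 2 (diagonal dU *ᵥ ((Uᵀ * X) *ᵥ v)))
      (WithLp.toLp 2 (Uᵀ *ᵥ (G *ᵥ v)))
    nlinarith [mul_norm_le_norm_diagonal_mulVec hσ hdU ((Uᵀ * X) *ᵥ v),
      (norm_transpose_mulVec_le hUV (G *ᵥ v)).trans hnoise]
  calc ‖(Vᵀ * (A * X + G)) *ᵥ v‖₂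
      ≤ ‖diagonal dV *ᵥ ((Vᵀ * X) *ᵥ v)‖₂ + ‖Vᵀ *ᵥ (G *ᵥ v)‖₂ := by
        rw [transpose_mul_mul_add_mulVec hVA, WithLp.toLp_add]
        exact norm_add_le _ _
    _ ≤ σ' * (t * a) + c * Δ * a := by
        gcongr
        · exact (norm_diagonal_mulVec_le hσ' hdV _).trans (by gcongr; exact h v)
        · exact (norm_transpose_mulVec_le hVU _).trans hnoise
    _ ≤ t' * ((σ - c * Δ) * a) := by nlinarith [norm_nonneg (WithLp.toLp 2 ((Uᵀ * X) *ᵥ v))]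
    _ ≤ t' * ‖(Uᵀ * (A * X + G)) *ᵥ v‖₂ := by gcongr

end TanAngleLE

end PrincipalAngles

section Iteration

open Real

theorem mul_add_le_mul_sub_of_gap {σ σ' γ ε Δ t t' : ℝ} (hσ : 0 < σ) (hσ' : σ' = (1 - γ) * σ)
    (hγ0 : 0 ≤ γ) (hγ1 : γ ≤ 1) (hε0 : 0 ≤ ε) (hε : ε ≤ 1 / 4) (hΔ : 0 ≤ Δ)
    (hgap : 8 * Δ ≤ γ * ε * σ) (hεt : ε ≤ t) (ht' : (1 - γ / 2) * t ≤ t') :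
    σ' * t + 5 / 4 * Δ ≤ t' * (σ - 5 / 4 * Δ) := by
  have ht : 0 ≤ t := hε0.trans hεt
  have hγσ : 0 ≤ γ * σ := mul_nonneg hγ0 hσ.le
  have hnoise_t : 5 / 4 * Δ ≤ 5 / 32 * (γ * σ) * t := by
    nlinarith [mul_le_mul_of_nonneg_left hεt hγσ]
  have hnoise : 5 / 4 * Δ ≤ 5 / 128 * (γ * σ) := by
    nlinarith [mul_le_mul_of_nonneg_left hε hγσ]
  calc σ' * t + 5 / 4 * Δ ≤ (1 - γ) * σ * t + 5 / 32 * (γ * σ) * t := by rw [hσ']; linarith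
    _ ≤ (1 - γ / 2) * σ * t - 5 / 128 * (γ * σ) * t := by nlinarith [mul_nonneg hγσ ht]
    _ ≤ (1 - γ / 2) * t * (σ - 5 / 4 * Δ) := by
        nlinarith [mul_le_mul_of_nonneg_right hnoise ht, mul_nonneg (mul_nonneg hγ0 ht) hΔ]
    _ ≤ t' * (σ - 5 / 4 * Δ) := by gcongr; nlinarith

theorem one_sub_half_mul_max_le {ε γ a : ℝ} (hε : 0 ≤ ε) (hγ : 0 ≤ γ) (ℓ : ℕ) :
    (1 - γ / 2) * max ε (a * exp (-(γ * ℓ) / 2)) ≤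
      max ε (a * exp (-(γ * (ℓ + 1 : ℕ)) / 2)) :=
  calc (1 - γ / 2) * max ε (a * exp (-(γ * ℓ) / 2))
      ≤ exp (-γ / 2) * max ε (a * exp (-(γ * ℓ) / 2)) := by
        gcongr
        linarith [add_one_le_exp (-γ / 2)]
    _ = max (exp (-γ / 2) * ε) (a * exp (-(γ * (ℓ + 1 : ℕ)) / 2)) := by
        rw [mul_max_of_nonneg _ _ (exp_pos _).le, mul_left_comm, ← exp_add]
        push_cast
        ring_nf
    _ ≤ max ε (a * exp (-(γ * (ℓ + 1 : ℕ)) / 2)) := by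
        gcongr
        exact mul_le_of_le_one_left hε (exp_le_one_iff.2 (by linarith))

variable {ι κ κ' μ : Type*} [Fintype ι] [Fintype κ] [Fintype κ'] [Fintype μ] [DecidableEq ι]
  [DecidableEq κ] [DecidableEq κ'] [DecidableEq μ]

theorem tanAngleLE_noisy_iterate {U : Matrix ι κ ℝ} {V : Matrix ι κ' ℝ} {A : Matrix ι ι ℝ}
    {dU : κ → ℝ} {dV : κ' → ℝ} {σ σ' γ ε Δ : ℝ} {X G : ℕ → Matrix ι μ ℝ} {b : ℕ → ℝ} {L : ℕ}
    (hUV : U * Uᵀ + V * Vᵀ = 1)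
    (hUA : Uᵀ * A = diagonal dU * Uᵀ) (hVA : Vᵀ * A = diagonal dV * Vᵀ)
    (hσ : 0 < σ) (hdU : ∀ i, σ ≤ |dU i|) (hσ'0 : 0 ≤ σ') (hdV : ∀ j, |dV j| ≤ σ')
    (hσ' : σ' = (1 - γ) * σ) (hγ0 : 0 ≤ γ) (hγ1 : γ ≤ 1) (hε0 : 0 ≤ ε) (hε : ε ≤ 1 / 4)
    (hgap : 8 * Δ ≤ γ * ε * σ) (hX : ∀ ℓ ≤ L, (X ℓ)ᵀ * X ℓ = 1)
    (hspan : ∀ ℓ < L, ∃ C : Matrix μ μ ℝ, X (ℓ + 1) = (A * X ℓ + G (ℓ + 1)) * C)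
    (hG : ∀ ℓ < L, specNorm (G (ℓ + 1)) ≤ Δ)
    (hεb : ∀ ℓ, ε ≤ b ℓ) (hb : ∀ ℓ, b ℓ ≤ 1 / 2)
    (hb_succ : ∀ ℓ, (1 - γ / 2) * b ℓ ≤ b (ℓ + 1)) (h0 : TanAngleLE U V (X 0) (b 0)) :
    ∀ ℓ ≤ L, TanAngleLE U V (X ℓ) (b ℓ) := by
  intro ℓ
  induction ℓ with
  | zero => exact fun _ => h0
  | succ ℓ ih =>
    intro hℓ
    have hXℓ := ih (by omega)
    have hb0 : 0 ≤ b ℓ := hε0.trans (hεb ℓ)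
    obtain ⟨C, hC⟩ := hspan ℓ hℓ
    rw [hC]
    refine (hXℓ.noisy_power_step hUV hUA hVA hσ.le hdU hσ'0 hdV (hG ℓ hℓ)
      (hXℓ.norm_le hUV (hX ℓ (by omega)) (c := 5 / 4) (by norm_num)
        (by nlinarith [hb ℓ])) ?_ (hε0.trans (hεb _))).mul_right C
    exact mul_add_le_mul_sub_of_gap hσ hσ' hγ0 hγ1 hε0 hε ((norm_nonneg _).trans (hG ℓ hℓ)) hgap
      (hεb ℓ) (hb_succ ℓ)

end Iteration

end NoisySubspaceIteration

open NoisySubspaceIteration in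
theorem local_convergence_noisy_subspace_iteration_general
    {n k : ℕ} (L : ℕ)
    (A : Matrix (Fin n) (Fin n) ℝ)
    (U : Matrix (Fin n) (Fin k) ℝ) (V : Matrix (Fin n) (Fin (n - k)) ℝ)
    (dU : Fin k → ℝ) (dV : Fin (n - k) → ℝ) (σk σk1 : ℝ)
    (hU : Uᵀ * U = 1) (hV : Vᵀ * V = 1) (hUV : Uᵀ * V = 0)
    (hfull : U * Uᵀ + V * Vᵀ = 1)
    (hA : A = U * Matrix.diagonal dU * Uᵀ + V * Matrix.diagonal dV * Vᵀ)
    (hσk : ∀ i, σk ≤ |dU i|) (hσk1 : ∀ j, |dV j| ≤ σk1)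
    (hσ1 : 0 ≤ σk1) (hσsep : σk1 ≤ σk) (hσkpos : 0 < σk)
    (X G : ℕ → Matrix (Fin n) (Fin k) ℝ)
    (hX0 : (X 0)ᵀ * X 0 = 1)
    (hiter : ∀ ℓ, 1 ≤ ℓ → ℓ ≤ L →
      (X ℓ)ᵀ * X ℓ = 1 ∧
      (∃ R : Matrix (Fin k) (Fin k) ℝ, A * X (ℓ - 1) + G ℓ = X ℓ * R) ∧
      (∃ C : Matrix (Fin k) (Fin k) ℝ, X ℓ = (A * X (ℓ - 1) + G ℓ) * C))
    (ε Δ γ : ℝ) (hε0 : 0 ≤ ε) (hε : ε ≤ 1/4)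
    (hΔ : ∀ ℓ, 1 ≤ ℓ → ℓ ≤ L → specNorm (G ℓ) ≤ Δ)
    (hγ : γ = 1 - σk1 / σk)
    (hinit : specNorm (Vᵀ * X 0) ≤ 1/4)
    (hgap : 8 * Δ ≤ γ * ε * σk) :
    specNorm (Vᵀ * X L) ≤
      max ε (2 * specNorm (Vᵀ * X 0) * Real.exp (-(γ * L) / 2)) := by
  have hγ0 : 0 ≤ γ := by rw [hγ, sub_nonneg]; exact div_le_one_of_le₀ hσsep hσkpos.le
  have hγ1 : γ ≤ 1 := by rw [hγ]; linarith [div_nonneg hσ1 hσkpos.le]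
  have hσk1γ : σk1 = (1 - γ) * σk := by rw [hγ]; field_simp; ring
  have hUA : Uᵀ * A = diagonal dU * Uᵀ := hA ▸ transpose_mul_add_mul_transpose hU hUV _ _
  have hVA : Vᵀ * A = diagonal dV * Vᵀ := by
    rw [hA, add_comm]
    exact transpose_mul_add_mul_transpose hV (by simpa using congrArg transpose hUV) _ _
  have hX : ∀ ℓ ≤ L, (X ℓ)ᵀ * X ℓ = 1
    | 0, _ => hX0
    | ℓ + 1, hℓ => (hiter (ℓ + 1) (by omega) hℓ).1
  set s := specNorm (Vᵀ * X 0)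
  have hs0 : 0 ≤ s := norm_nonneg _
  have hexp : ∀ ℓ : ℕ, Real.exp (-(γ * ℓ) / 2) ≤ 1 := fun ℓ =>
    Real.exp_le_one_iff.2 (by nlinarith [mul_nonneg hγ0 ℓ.cast_nonneg])
  have hb : ∀ ℓ : ℕ, max ε (2 * s * Real.exp (-(γ * ℓ) / 2)) ≤ 1 / 2 := fun ℓ =>
    max_le (by linarith) (by nlinarith [hexp ℓ, Real.exp_pos (-(γ * ℓ) / 2)])
  have hbase : TanAngleLE U V (X 0) (max ε (2 * s * Real.exp (-(γ * (0 : ℕ)) / 2))) :=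
    (tanAngleLE_two_mul_specNorm hfull hX0 (by linarith)).mono (by simp [s])
  have htan := tanAngleLE_noisy_iterate hfull hUA hVA hσkpos hσk hσ1 hσk1 hσk1γ hγ0 hγ1 hε0 hε
    hgap hX (fun ℓ hℓ => by simpa using (hiter (ℓ + 1) (by omega) hℓ).2.2)
    (fun ℓ hℓ => hΔ (ℓ + 1) (by omega) hℓ) (fun ℓ => le_max_left _ _) hb
    (one_sub_half_mul_max_le hε0 hγ0) hbase L le_rfl
  exact htan.specNorm_le hfull (hX L le_rfl) (hε0.trans (le_max_left _ _))

/-- **Local convergence of noisy subspace iteration.**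
`A = U Λ_U Uᵀ + V Λ_V Vᵀ` is symmetric with `U, V` orthonormal bases of complementary
subspaces, `σk` a lower bound on the absolute eigenvalues in `Λ_U` and `σk1` an upper
bound on those in `Λ_V`.  Noisy subspace iteration: for `1 ≤ ℓ ≤ L`, `X ℓ` is an
orthonormal basis for the column span of `Y ℓ = A * X (ℓ-1) + G ℓ`.  With
`Δ = max ‖G ℓ‖`, `γ = 1 − σ_{k+1}/σ_k`, if `‖Vᵀ X 0‖ ≤ 1/4`, `0 ≤ ε ≤ 1/4` and
`σ_k ≥ 8Δ/(γ ε)` then `‖Vᵀ X L‖ ≤ max ε (2 ‖Vᵀ X 0‖ exp(−γL/2))`. -/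
theorem local_convergence_noisy_subspace_iteration
    {n k : ℕ} (hkn : k ≤ n) (L : ℕ)
    (A : Matrix (Fin n) (Fin n) ℝ)
    (U : Matrix (Fin n) (Fin k) ℝ) (V : Matrix (Fin n) (Fin (n - k)) ℝ)
    (dU : Fin k → ℝ) (dV : Fin (n - k) → ℝ) (σk σk1 : ℝ)
    (hU : Uᵀ * U = 1) (hV : Vᵀ * V = 1) (hUV : Uᵀ * V = 0)
    (hfull : U * Uᵀ + V * Vᵀ = 1)
    (hA : A = U * Matrix.diagonal dU * Uᵀ + V * Matrix.diagonal dV * Vᵀ)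
    (hσk : ∀ i, σk ≤ |dU i|) (hσk1 : ∀ j, |dV j| ≤ σk1)
    (hσ1 : 0 ≤ σk1) (hσsep : σk1 ≤ σk) (hσkpos : 0 < σk)
    (X G : ℕ → Matrix (Fin n) (Fin k) ℝ)
    (hX0 : (X 0)ᵀ * X 0 = 1)
    (hiter : ∀ ℓ, 1 ≤ ℓ → ℓ ≤ L →
      (X ℓ)ᵀ * X ℓ = 1 ∧
      (∃ R : Matrix (Fin k) (Fin k) ℝ, A * X (ℓ - 1) + G ℓ = X ℓ * R) ∧
      (∃ C : Matrix (Fin k) (Fin k) ℝ, X ℓ = (A * X (ℓ - 1) + G ℓ) * C))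
    (ε Δ γ : ℝ) (hε0 : 0 ≤ ε) (hε : ε ≤ 1/4)
    (hΔ : ∀ ℓ, 1 ≤ ℓ → ℓ ≤ L → specNorm (G ℓ) ≤ Δ)
    (hγ : γ = 1 - σk1 / σk)
    (hinit : specNorm (Vᵀ * X 0) ≤ 1/4)
    (hgap : 8 * Δ ≤ γ * ε * σk) :
    specNorm (Vᵀ * X L) ≤
      max ε (2 * specNorm (Vᵀ * X 0) * Real.exp (-(γ * L) / 2)) :=
  local_convergence_noisy_subspace_iteration_general L A U V dU dV σk σk1 hU hV hUV hfull hA hσk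
    hσk1 hσ1 hσsep hσkpos X G hX0 hiter ε Δ γ hε0 hε hΔ hγ hinit hgap
end

section
/- (Convergence of noisy subspace iteration under admissible noise.) Let A be a symmetric n×n real matrix with spectral decomposition A = UΛ_U Uᵀ + VΛ_V Vᵀ (U ∈ ℝ^{n×k}, V ∈ ℝ^{n×(n−k)} orthonormal, σ₁ ≥ … ≥ σ_n the absolute eigenvalues in non-increasing order), and let γ_k = 1 − σ_{k+1}/σ_k. Consider the noisy subspace iteration: starting from an orthonormal X₀ ∈ ℝ^{n×k}, for ℓ = 1,…,L set Y_ℓ = A X_{ℓ−1} + G_ℓ and let X_ℓ be an orthonormal basis for the column span of Y_ℓ. Let ε ≤ 1/2. Assume that each pair (X_{ℓ−1}, G_ℓ) is (ε/2)-admissible, i.e. ‖G_ℓ‖ ≤ (1/32) γ_k σ_k ‖Vᵀ X_{ℓ−1}‖ + (ε/64) γ_k σ_k, and that ‖Vᵀ X₀‖ ≤ 1/4. Then ‖Vᵀ X_L‖ ≤ ε for any L ≥ 4 γ_k^{-1} log(1/ε). -/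
/-!
The invariant is a bound `τ` on the tangent of the largest principal angle `θ` between the
column span of `X ℓ` and that of `U`, written `‖Vᵀ X‖² (1 + τ²) ≤ τ²` to avoid division.
A vector `(A X + G) v` has `V`-component of norm at most `(σ_{k+1} sin θ + ‖G‖) ‖v‖` and
`U`-component of norm at least `(σ_k cos θ - ‖G‖) ‖v‖`; for admissible noise their ratio is at
most `max ε ((1 - γ/4) τ)`, so the tangent bound contracts geometrically until it reaches `ε`,
which happens within `4 γ⁻¹ log (1/ε)` steps.
-/

open Matrix

section OperatorNorm

lemma toEuclideanLin_mul_apply {m n p : Type*} [Fintype n] [Fintype p] [DecidableEq n]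
    [DecidableEq p] (A : Matrix m n ℝ) (B : Matrix n p ℝ) (x : EuclideanSpace ℝ p) :
    toEuclideanLin (A * B) x = toEuclideanLin A (toEuclideanLin B x) := by
  simp

variable {m n p : Type*} [Fintype m] [Fintype n] [Fintype p]

lemma specNorm_nonneg [DecidableEq n] (A : Matrix m n ℝ) : 0 ≤ specNorm A :=
  norm_nonneg _

lemma norm_toEuclideanLin_le_specNorm_mul [DecidableEq n] (A : Matrix m n ℝ)
    (x : EuclideanSpace ℝ n) :
    ‖toEuclideanLin A x‖ ≤ specNorm A * ‖x‖ :=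
  (LinearMap.toContinuousLinearMap (toEuclideanLin A)).le_opNorm x

lemma specNorm_le_of_norm_le [DecidableEq n] {A : Matrix m n ℝ} {c : ℝ} (hc : 0 ≤ c)
    (h : ∀ x, ‖toEuclideanLin A x‖ ≤ c * ‖x‖) : specNorm A ≤ c :=
  ContinuousLinearMap.opNorm_le_bound _ hc h

lemma inner_toEuclideanLin_self [DecidableEq m] [DecidableEq n] (A : Matrix m n ℝ)
    (x : EuclideanSpace ℝ n) :
    inner ℝ (toEuclideanLin A x) (toEuclideanLin A x) =
      inner ℝ x (toEuclideanLin (Aᵀ * A) x) := by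
  rw [toEuclideanLin_mul_apply, ← conjTranspose_eq_transpose_of_trivial,
    toEuclideanLin_conjTranspose_eq_adjoint, LinearMap.adjoint_inner_right]

lemma norm_toEuclideanLin_of_transpose_mul_self [DecidableEq m] [DecidableEq n]
    {A : Matrix m n ℝ} (hA : Aᵀ * A = 1) (x : EuclideanSpace ℝ n) : ‖toEuclideanLin A x‖ = ‖x‖ := by
  have h := inner_toEuclideanLin_self A x
  rw [hA, toLpLin_one, LinearMap.id_apply, real_inner_self_eq_norm_sq,
    real_inner_self_eq_norm_sq] at h
  exact (sq_eq_sq₀ (norm_nonneg _) (norm_nonneg _)).1 h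

lemma norm_sq_add_norm_sq_of_mul_transpose_add [DecidableEq m] {U : Matrix m n ℝ}
    {V : Matrix m p ℝ} (h : U * Uᵀ + V * Vᵀ = 1) (z : EuclideanSpace ℝ m) :
    ‖toEuclideanLin Uᵀ z‖ ^ 2 + ‖toEuclideanLin Vᵀ z‖ ^ 2 = ‖z‖ ^ 2 := by
  classical
  have hU := inner_toEuclideanLin_self Uᵀ z
  have hV := inner_toEuclideanLin_self Vᵀ z
  rw [transpose_transpose, real_inner_self_eq_norm_sq] at hU hV
  rw [hU, hV, ← inner_add_right, ← LinearMap.add_apply, ← map_add, h, toLpLin_one,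
    LinearMap.id_apply, real_inner_self_eq_norm_sq]

lemma norm_toEuclideanLin_transpose_le [DecidableEq m] {U : Matrix m n ℝ} {V : Matrix m p ℝ}
    (h : U * Uᵀ + V * Vᵀ = 1) (z : EuclideanSpace ℝ m) :
    ‖toEuclideanLin Vᵀ z‖ ≤ ‖z‖ := by
  have := norm_sq_add_norm_sq_of_mul_transpose_add h z
  exact le_of_sq_le_sq (by nlinarith [sq_nonneg ‖toEuclideanLin Uᵀ z‖]) (norm_nonneg z)

lemma norm_sq_toEuclideanLin_diagonal [DecidableEq n] (d : n → ℝ) (x : EuclideanSpace ℝ n) :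
    ‖toEuclideanLin (diagonal d) x‖ ^ 2 = ∑ i, d i ^ 2 * x i ^ 2 := by
  simp [EuclideanSpace.norm_sq_eq, toLpLin_apply, mulVec_diagonal, mul_pow]

lemma norm_toEuclideanLin_diagonal_le [DecidableEq n] {d : n → ℝ} {c : ℝ} (hc : 0 ≤ c)
    (h : ∀ i, |d i| ≤ c) (x : EuclideanSpace ℝ n) : ‖toEuclideanLin (diagonal d) x‖ ≤ c * ‖x‖ := by
  refine le_of_sq_le_sq ?_ (by positivity)
  rw [norm_sq_toEuclideanLin_diagonal, mul_pow, EuclideanSpace.norm_sq_eq, Finset.mul_sum]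
  simp only [Real.norm_eq_abs, sq_abs]
  refine Finset.sum_le_sum fun i _ => mul_le_mul_of_nonneg_right ?_ (sq_nonneg _)
  exact sq_le_sq.2 ((abs_of_nonneg hc).symm ▸ h i)

lemma le_norm_toEuclideanLin_diagonal [DecidableEq n] {d : n → ℝ} {c : ℝ} (hc : 0 ≤ c)
    (h : ∀ i, c ≤ |d i|) (x : EuclideanSpace ℝ n) : c * ‖x‖ ≤ ‖toEuclideanLin (diagonal d) x‖ := by
  refine le_of_sq_le_sq ?_ (norm_nonneg _)
  rw [norm_sq_toEuclideanLin_diagonal, mul_pow, EuclideanSpace.norm_sq_eq, Finset.mul_sum]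
  simp only [Real.norm_eq_abs, sq_abs]
  refine Finset.sum_le_sum fun i _ => mul_le_mul_of_nonneg_right ?_ (sq_nonneg _)
  exact sq_le_sq.2 ((abs_of_nonneg hc).symm ▸ h i)

end OperatorNorm

lemma transpose_mul_eq_diagonal_mul_transpose {m n p : Type*} [Fintype m] [Fintype n]
    [Fintype p] [DecidableEq n] [DecidableEq p] {U : Matrix m n ℝ} {V : Matrix m p ℝ} (dU : n → ℝ)
    (dV : p → ℝ) (hU : Uᵀ * U = 1) (hUV : Uᵀ * V = 0) :
    Uᵀ * (U * diagonal dU * Uᵀ + V * diagonal dV * Vᵀ) = diagonal dU * Uᵀ := by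
  simp only [Matrix.mul_add, ← Matrix.mul_assoc, hU, hUV, Matrix.zero_mul, Matrix.one_mul,
    add_zero]

section NoisyContraction

variable {σ γ ε ρ s τ g : ℝ}

lemma noisy_contraction_of_le (hσ : 0 < σ) (hγ0 : 0 ≤ γ) (hγ1 : γ ≤ 1) (hρτ : ρ ≤ τ * s)
    (hs : 1 / 2 ≤ s) (hτ0 : 0 ≤ τ) (hτ : τ ≤ 1 / 2) (hετ : ε ≤ τ)
    (hg : g ≤ 1 / 32 * γ * σ * ρ + ε / 64 * γ * σ) :
    (1 - γ) * σ * ρ + g ≤ (1 - γ / 4) * τ * (σ * s - g) := by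
  have hγστ : 0 ≤ γ * σ * τ := by positivity
  have hc0 : 0 ≤ (1 - γ / 4) * τ := mul_nonneg (by linarith) hτ0
  have hc : (1 - γ / 4) * τ ≤ 1 / 2 := by nlinarith
  have hg' : g ≤ γ * σ * τ * (s / 32 + 1 / 64) := by
    nlinarith [mul_le_mul_of_nonneg_left hρτ (by positivity : 0 ≤ γ * σ),
      mul_le_mul_of_nonneg_left hετ (by positivity : 0 ≤ γ * σ)]
  have hgain : (s / 32 + 1 / 64) * (1 + (1 - γ / 4) * τ) ≤ 3 / 4 * s := by
    nlinarith [mul_le_mul_of_nonneg_left hc (by linarith : 0 ≤ s / 32 + 1 / 64)]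
  calc (1 - γ) * σ * ρ + g ≤ (1 - γ) * σ * (τ * s) + γ * σ * τ * (s / 32 + 1 / 64) := by
        gcongr
    _ ≤ (1 - γ / 4) * τ * (σ * s - γ * σ * τ * (s / 32 + 1 / 64)) := by
        nlinarith [mul_le_mul_of_nonneg_left hgain hγστ]
    _ ≤ (1 - γ / 4) * τ * (σ * s - g) := by
        gcongr

lemma noisy_contraction_of_ge (hσ : 0 < σ) (hγ0 : 0 ≤ γ) (hγ1 : γ ≤ 1) (hε : ε ≤ 1 / 2)
    (hρ0 : 0 ≤ ρ) (hρτ : ρ ≤ τ * s) (hs : 1 / 2 ≤ s) (hs1 : s ≤ 1) (hτ : τ ≤ 1 / 2)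
    (hτε : (1 - γ / 4) * τ ≤ ε) (hg : g ≤ 1 / 32 * γ * σ * ρ + ε / 64 * γ * σ) :
    (1 - γ) * σ * ρ + g ≤ ε * (σ * s - g) := by
  have hε0 : 0 ≤ ε := le_trans (by nlinarith) hτε
  have hρ : (1 - γ / 4) * ρ ≤ ε * s := by
    nlinarith [mul_le_mul_of_nonneg_left hρτ (by linarith : 0 ≤ 1 - γ / 4),
      mul_le_mul_of_nonneg_right hτε (by linarith : 0 ≤ s)]
  have hρ' : (1 - 31 / 32 * γ) * ρ ≤ (1 - 23 / 32 * γ) * (ε * s) := by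
    nlinarith [mul_le_mul_of_nonneg_left hρ (by linarith : 0 ≤ 1 - 23 / 32 * γ),
      mul_nonneg (sq_nonneg γ) hρ0]
  have hρ2 : ρ ≤ 1 / 2 := by nlinarith
  have hg' : g ≤ 3 / 128 * γ * σ := by
    nlinarith [mul_le_mul_of_nonneg_left hρ2 (by positivity : 0 ≤ γ * σ),
      mul_le_mul_of_nonneg_left hε (by positivity : 0 ≤ γ * σ)]
  calc (1 - γ) * σ * ρ + g ≤ σ * ((1 - 31 / 32 * γ) * ρ + ε * γ / 64) := by linarith
    _ ≤ σ * ((1 - 23 / 32 * γ) * (ε * s) + ε * γ / 64) := by gcongr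
    _ ≤ ε * (σ * s - 3 / 128 * γ * σ) := by
        nlinarith [mul_nonneg (mul_nonneg hε0 hγ0) hσ.le]
    _ ≤ ε * (σ * s - g) := by gcongr

lemma noisy_contraction (hσ : 0 < σ) (hγ0 : 0 ≤ γ) (hγ1 : γ ≤ 1) (hε : ε ≤ 1 / 2)
    (hρ0 : 0 ≤ ρ) (hρτ : ρ ≤ τ * s) (hs : 1 / 2 ≤ s) (hs1 : s ≤ 1) (hτ0 : 0 ≤ τ)
    (hτ : τ ≤ 1 / 2) (hg : g ≤ 1 / 32 * γ * σ * ρ + ε / 64 * γ * σ) :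
    (1 - γ) * σ * ρ + g ≤ max ε ((1 - γ / 4) * τ) * (σ * s - g) := by
  rcases le_total ε ((1 - γ / 4) * τ) with h | h
  · rw [max_eq_right h]
    exact noisy_contraction_of_le hσ hγ0 hγ1 hρτ hs hτ0 hτ (h.trans (by nlinarith)) hg
  · rw [max_eq_left h]
    exact noisy_contraction_of_ge hσ hγ0 hγ1 hε hρ0 hρτ hs hs1 hτ h hg

end NoisyContraction

section NoisyStep

variable {m n p r : Type*} [Fintype m] [Fintype n] [Fintype p] [Fintype r]
  [DecidableEq m] [DecidableEq r] {U : Matrix m n ℝ} {V : Matrix m p ℝ}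

lemma toEuclideanLin_transpose_mul_add_apply [DecidableEq n] {A : Matrix m m ℝ}
    {W : Matrix m n ℝ} {d : n → ℝ} (hW : Wᵀ * A = diagonal d * Wᵀ) (X G : Matrix m r ℝ)
    (v : EuclideanSpace ℝ r) :
    toEuclideanLin (Wᵀ * (A * X + G)) v =
      toEuclideanLin (diagonal d) (toEuclideanLin (Wᵀ * X) v) +
        toEuclideanLin Wᵀ (toEuclideanLin G v) := by
  rw [Matrix.mul_add, ← Matrix.mul_assoc, hW, Matrix.mul_assoc]
  simp

lemma norm_sq_add_norm_sq_of_transpose_mul_self (hfull : U * Uᵀ + V * Vᵀ = 1)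
    {X : Matrix m r ℝ} (hX : Xᵀ * X = 1) (v : EuclideanSpace ℝ r) :
    ‖toEuclideanLin (Uᵀ * X) v‖ ^ 2 + ‖toEuclideanLin (Vᵀ * X) v‖ ^ 2 = ‖v‖ ^ 2 := by
  rw [toEuclideanLin_mul_apply, toEuclideanLin_mul_apply,
    norm_sq_add_norm_sq_of_mul_transpose_add hfull, norm_toEuclideanLin_of_transpose_mul_self hX]

lemma sqrt_one_sub_specNorm_sq_mul_le (hfull : U * Uᵀ + V * Vᵀ = 1) {X : Matrix m r ℝ}
    (hX : Xᵀ * X = 1) (v : EuclideanSpace ℝ r) :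
    √(1 - specNorm (Vᵀ * X) ^ 2) * ‖v‖ ≤ ‖toEuclideanLin (Uᵀ * X) v‖ := by
  have hsplit := norm_sq_add_norm_sq_of_transpose_mul_self hfull hX v
  have hV : ‖toEuclideanLin (Vᵀ * X) v‖ ^ 2 ≤ (specNorm (Vᵀ * X) * ‖v‖) ^ 2 :=
    pow_le_pow_left₀ (norm_nonneg _) (norm_toEuclideanLin_le_specNorm_mul _ v) 2
  rw [← Real.sqrt_sq (norm_nonneg v), ← Real.sqrt_mul' _ (sq_nonneg _),
    ← Real.sqrt_sq (norm_nonneg (toEuclideanLin (Uᵀ * X) v))]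
  exact Real.sqrt_le_sqrt (by nlinarith)

lemma norm_transpose_noisy_step_le [DecidableEq p] {A : Matrix m m ℝ} {dV : p → ℝ}
    (hfull : U * Uᵀ + V * Vᵀ = 1) (hVA : Vᵀ * A = diagonal dV * Vᵀ) {c : ℝ} (hc : 0 ≤ c)
    (hdV : ∀ j, |dV j| ≤ c) (X G : Matrix m r ℝ) (v : EuclideanSpace ℝ r) :
    ‖toEuclideanLin (Vᵀ * (A * X + G)) v‖ ≤ (c * specNorm (Vᵀ * X) + specNorm G) * ‖v‖ := by
  rw [toEuclideanLin_transpose_mul_add_apply hVA]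
  calc _ ≤ ‖toEuclideanLin (diagonal dV) (toEuclideanLin (Vᵀ * X) v)‖ +
        ‖toEuclideanLin Vᵀ (toEuclideanLin G v)‖ := norm_add_le _ _
    _ ≤ c * (specNorm (Vᵀ * X) * ‖v‖) + specNorm G * ‖v‖ := by
      gcongr
      · exact (norm_toEuclideanLin_diagonal_le hc hdV _).trans
          (by gcongr; exact norm_toEuclideanLin_le_specNorm_mul _ _)
      · exact (norm_toEuclideanLin_transpose_le hfull _).trans
          (norm_toEuclideanLin_le_specNorm_mul _ _)
    _ = _ := by ring

lemma le_norm_transpose_noisy_step [DecidableEq n] {A : Matrix m m ℝ} {dU : n → ℝ}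
    (hfull : U * Uᵀ + V * Vᵀ = 1) (hUA : Uᵀ * A = diagonal dU * Uᵀ) {σ : ℝ} (hσ : 0 ≤ σ)
    (hdU : ∀ i, σ ≤ |dU i|) {X : Matrix m r ℝ} (hX : Xᵀ * X = 1) (G : Matrix m r ℝ)
    (v : EuclideanSpace ℝ r) :
    (σ * √(1 - specNorm (Vᵀ * X) ^ 2) - specNorm G) * ‖v‖ ≤
      ‖toEuclideanLin (Uᵀ * (A * X + G)) v‖ := by
  rw [toEuclideanLin_transpose_mul_add_apply hUA]
  have hfull' : V * Vᵀ + U * Uᵀ = 1 := by rwa [add_comm]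
  have hsignal : σ * (√(1 - specNorm (Vᵀ * X) ^ 2) * ‖v‖) ≤
      ‖toEuclideanLin (diagonal dU) (toEuclideanLin (Uᵀ * X) v)‖ :=
    (mul_le_mul_of_nonneg_left (sqrt_one_sub_specNorm_sq_mul_le hfull hX v) hσ).trans
      (le_norm_toEuclideanLin_diagonal hσ hdU _)
  have hnoise : ‖toEuclideanLin Uᵀ (toEuclideanLin G v)‖ ≤ specNorm G * ‖v‖ :=
    (norm_toEuclideanLin_transpose_le hfull' _).trans (norm_toEuclideanLin_le_specNorm_mul _ _)
  calc _ = σ * (√(1 - specNorm (Vᵀ * X) ^ 2) * ‖v‖) - specNorm G * ‖v‖ := by ring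
    _ ≤ _ := (sub_le_sub hsignal hnoise).trans (norm_sub_le_norm_add _ _)

lemma specNorm_sq_mul_le_of_forall_le_mul (hfull : U * Uᵀ + V * Vᵀ = 1) {X : Matrix m r ℝ}
    (hX : Xᵀ * X = 1) {τ : ℝ}
    (h : ∀ u, ‖toEuclideanLin (Vᵀ * X) u‖ ≤ τ * ‖toEuclideanLin (Uᵀ * X) u‖) :
    specNorm (Vᵀ * X) ^ 2 * (1 + τ ^ 2) ≤ τ ^ 2 := by
  have hpos : 0 < 1 + τ ^ 2 := by positivity
  suffices specNorm (Vᵀ * X) ≤ √(τ ^ 2 / (1 + τ ^ 2)) by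
    rw [← le_div_iff₀ hpos]
    exact (Real.le_sqrt (specNorm_nonneg _) (by positivity)).1 this
  refine specNorm_le_of_norm_le (Real.sqrt_nonneg _) fun u => ?_
  have hsplit := norm_sq_add_norm_sq_of_transpose_mul_self hfull hX u
  have hsq : ‖toEuclideanLin (Vᵀ * X) u‖ ^ 2 ≤ τ ^ 2 / (1 + τ ^ 2) * ‖u‖ ^ 2 := by
    rw [div_mul_eq_mul_div, le_div_iff₀ hpos]
    nlinarith [pow_le_pow_left₀ (norm_nonneg _) (h u) 2]
  rw [← Real.sqrt_sq (norm_nonneg u), ← Real.sqrt_mul (by positivity),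
    ← Real.sqrt_sq (norm_nonneg (toEuclideanLin (Vᵀ * X) u))]
  exact Real.sqrt_le_sqrt hsq

theorem specNorm_sq_mul_le_of_noisy_step [DecidableEq n] [DecidableEq p] {A : Matrix m m ℝ}
    {dU : n → ℝ} {dV : p → ℝ} (hfull : U * Uᵀ + V * Vᵀ = 1) (hUA : Uᵀ * A = diagonal dU * Uᵀ)
    (hVA : Vᵀ * A = diagonal dV * Vᵀ) {σ γ ε τ : ℝ} (hσ : 0 < σ) (hγ0 : 0 ≤ γ) (hγ1 : γ ≤ 1)
    (hdU : ∀ i, σ ≤ |dU i|) (hdV : ∀ j, |dV j| ≤ (1 - γ) * σ) (hε : ε ≤ 1 / 2)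
    {X X' G : Matrix m r ℝ} {C : Matrix r r ℝ} (hX : Xᵀ * X = 1) (hX' : X'ᵀ * X' = 1)
    (hC : X' = (A * X + G) * C)
    (hG : specNorm G ≤ 1 / 32 * γ * σ * specNorm (Vᵀ * X) + ε / 64 * γ * σ)
    (hτ0 : 0 ≤ τ) (hτ : τ ≤ 1 / 2) (hinv : specNorm (Vᵀ * X) ^ 2 * (1 + τ ^ 2) ≤ τ ^ 2) :
    specNorm (Vᵀ * X') ^ 2 * (1 + max ε ((1 - γ / 4) * τ) ^ 2) ≤
      max ε ((1 - γ / 4) * τ) ^ 2 := by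
  set ρ := specNorm (Vᵀ * X)
  set τ' := max ε ((1 - γ / 4) * τ)
  have hρ0 : 0 ≤ ρ := specNorm_nonneg _
  have hτ'0 : 0 ≤ τ' := le_max_of_le_right (mul_nonneg (by linarith) hτ0)
  have hρτ : ρ ≤ τ * √(1 - ρ ^ 2) := by
    rw [← Real.sqrt_sq hτ0, ← Real.sqrt_mul (sq_nonneg _)]
    exact (Real.le_sqrt hρ0 (by nlinarith)).2 (by nlinarith)
  have hs : 1 / 2 ≤ √(1 - ρ ^ 2) := (Real.le_sqrt (by norm_num) (by nlinarith)).2 (by nlinarith)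
  have hs1 : √(1 - ρ ^ 2) ≤ 1 := Real.sqrt_le_one.2 (by nlinarith)
  have hcontract := noisy_contraction hσ hγ0 hγ1 hε hρ0 hρτ hs hs1 hτ0 hτ hG
  have hcone (v : EuclideanSpace ℝ r) :
      ‖toEuclideanLin (Vᵀ * (A * X + G)) v‖ ≤ τ' * ‖toEuclideanLin (Uᵀ * (A * X + G)) v‖ :=
    calc _ ≤ ((1 - γ) * σ * ρ + specNorm G) * ‖v‖ :=
          norm_transpose_noisy_step_le hfull hVA (by nlinarith) hdV X G v
      _ ≤ τ' * ((σ * √(1 - ρ ^ 2) - specNorm G) * ‖v‖) := by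
          rw [← mul_assoc]; exact mul_le_mul_of_nonneg_right hcontract (norm_nonneg v)
      _ ≤ _ := by gcongr; exact le_norm_transpose_noisy_step hfull hUA hσ.le hdU hX G v
  refine specNorm_sq_mul_le_of_forall_le_mul hfull hX' fun u => ?_
  simpa only [hC, ← Matrix.mul_assoc, toEuclideanLin_mul_apply _ C] using
    hcone (toEuclideanLin C u)

end NoisyStep

lemma one_sub_pow_le_of_log_inv_le {x ε : ℝ} {L : ℕ} (hx : x ≤ 1) (hε : 0 < ε)
    (h : Real.log (1 / ε) ≤ x * L) : (1 - x) ^ L ≤ ε :=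
  calc (1 - x) ^ L ≤ Real.exp (-x) ^ L :=
        pow_le_pow_left₀ (sub_nonneg.2 hx) (Real.one_sub_le_exp_neg x) L
    _ = Real.exp (L * -x) := (Real.exp_nat_mul _ _).symm
    _ ≤ Real.exp (Real.log ε) := by
        rw [one_div, Real.log_inv] at h
        exact Real.exp_le_exp.2 (by linarith)
    _ = ε := Real.exp_log hε

/-- Bound on `tan θ(X ℓ)`.  The start value `13/50` exceeds `1/√15`, the tangent of an angle
whose sine is `1/4`. -/
noncomputable def tanBound (γ ε : ℝ) (ℓ : ℕ) : ℝ :=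
  max ε ((1 - γ / 4) ^ ℓ * (13 / 50))

section TanBound

variable {γ ε : ℝ}

lemma tanBound_succ (hγ0 : 0 ≤ γ) (hγ : γ ≤ 4) (hε : 0 ≤ ε) (ℓ : ℕ) :
    tanBound γ ε (ℓ + 1) = max ε ((1 - γ / 4) * tanBound γ ε ℓ) := by
  have hε' : max ε ((1 - γ / 4) * ε) = ε := max_eq_left (by nlinarith)
  rw [tanBound, tanBound, mul_max_of_nonneg _ _ (by linarith), ← max_assoc, hε', pow_succ',
    mul_assoc]

lemma tanBound_le_half (hγ0 : 0 ≤ γ) (hγ : γ ≤ 4) (hε : ε ≤ 1 / 2) (ℓ : ℕ) :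
    tanBound γ ε ℓ ≤ 1 / 2 := by
  have : (1 - γ / 4) ^ ℓ ≤ 1 := pow_le_one₀ (by linarith) (by linarith)
  exact max_le hε (by linarith)

lemma tanBound_eq_of_log_inv_le (hγ : γ ≤ 4) (hε : 0 < ε) {L : ℕ}
    (hL : 4 * Real.log (1 / ε) ≤ γ * L) : tanBound γ ε L = ε := by
  have := one_sub_pow_le_of_log_inv_le (x := γ / 4) (L := L) (by linarith) hε (by linarith)
  exact max_eq_left (by nlinarith [pow_nonneg (by linarith : (0 : ℝ) ≤ 1 - γ / 4) L])

end TanBound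

theorem specNorm_sq_mul_le_tanBound_of_noisy_iteration {m n p r : Type*} [Fintype m]
    [Fintype n] [Fintype p] [Fintype r] [DecidableEq m] [DecidableEq n] [DecidableEq p]
    [DecidableEq r] {U : Matrix m n ℝ} {V : Matrix m p ℝ} {A : Matrix m m ℝ} {dU : n → ℝ}
    {dV : p → ℝ}
    (hfull : U * Uᵀ + V * Vᵀ = 1) (hUA : Uᵀ * A = diagonal dU * Uᵀ)
    (hVA : Vᵀ * A = diagonal dV * Vᵀ) {σ γ ε : ℝ} (hσ : 0 < σ) (hγ0 : 0 ≤ γ) (hγ1 : γ ≤ 1)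
    (hdU : ∀ i, σ ≤ |dU i|) (hdV : ∀ j, |dV j| ≤ (1 - γ) * σ) (hε0 : 0 ≤ ε) (hε : ε ≤ 1 / 2)
    {L : ℕ} {X G : ℕ → Matrix m r ℝ} (hX0 : (X 0)ᵀ * X 0 = 1)
    (hiter : ∀ ℓ, 1 ≤ ℓ → ℓ ≤ L →
      (X ℓ)ᵀ * X ℓ = 1 ∧ ∃ C : Matrix r r ℝ, X ℓ = (A * X (ℓ - 1) + G ℓ) * C)
    (hadm : ∀ ℓ, 1 ≤ ℓ → ℓ ≤ L →
      specNorm (G ℓ) ≤ 1 / 32 * γ * σ * specNorm (Vᵀ * X (ℓ - 1)) + ε / 64 * γ * σ)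
    (hinit : specNorm (Vᵀ * X 0) ≤ 1 / 4) :
    ∀ ℓ ≤ L, (X ℓ)ᵀ * X ℓ = 1 ∧
      specNorm (Vᵀ * X ℓ) ^ 2 * (1 + tanBound γ ε ℓ ^ 2) ≤ tanBound γ ε ℓ ^ 2 := by
  intro ℓ
  induction ℓ with
  | zero =>
    intro _
    have hρ0 := specNorm_nonneg (Vᵀ * X 0)
    have hτ : 13 / 50 ≤ tanBound γ ε 0 := by simp [tanBound]
    have hρ : specNorm (Vᵀ * X 0) ^ 2 ≤ 1 / 16 := by nlinarith
    exact ⟨hX0, by nlinarith [mul_le_mul_of_nonneg_right hρ (by positivity :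
      (0 : ℝ) ≤ 1 + tanBound γ ε 0 ^ 2)]⟩
  | succ ℓ ih =>
    intro hℓ
    obtain ⟨hX, hinv⟩ := ih (by omega)
    obtain ⟨hX', C, hC⟩ := hiter (ℓ + 1) (by omega) hℓ
    have hG := hadm (ℓ + 1) (by omega) hℓ
    simp only [Nat.add_sub_cancel] at hC hG
    rw [tanBound_succ hγ0 (by linarith) hε0]
    exact ⟨hX', specNorm_sq_mul_le_of_noisy_step hfull hUA hVA hσ hγ0 hγ1 hdU hdV hε hX hX' hC
      hG (hε0.trans (le_max_left _ _)) (tanBound_le_half hγ0 (by linarith) hε ℓ) hinv⟩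

theorem convergence_admissible_noise_general
    {n k : ℕ} (L : ℕ)
    (A : Matrix (Fin n) (Fin n) ℝ)
    (U : Matrix (Fin n) (Fin k) ℝ) (V : Matrix (Fin n) (Fin (n - k)) ℝ)
    (dU : Fin k → ℝ) (dV : Fin (n - k) → ℝ) (σk σk1 : ℝ)
    (hU : Uᵀ * U = 1) (hV : Vᵀ * V = 1) (hUV : Uᵀ * V = 0)
    (hfull : U * Uᵀ + V * Vᵀ = 1)
    (hA : A = U * Matrix.diagonal dU * Uᵀ + V * Matrix.diagonal dV * Vᵀ)
    (hσk : ∀ i, σk ≤ |dU i|) (hσk1 : ∀ j, |dV j| ≤ σk1)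
    (hσ1 : 0 ≤ σk1) (hσkpos : 0 < σk)
    (X G : ℕ → Matrix (Fin n) (Fin k) ℝ)
    (hX0 : (X 0)ᵀ * X 0 = 1)
    (hiter : ∀ ℓ, 1 ≤ ℓ → ℓ ≤ L →
      (X ℓ)ᵀ * X ℓ = 1 ∧
      (∃ R : Matrix (Fin k) (Fin k) ℝ, A * X (ℓ - 1) + G ℓ = X ℓ * R) ∧
      (∃ C : Matrix (Fin k) (Fin k) ℝ, X ℓ = (A * X (ℓ - 1) + G ℓ) * C))
    (ε γ : ℝ) (hε0 : 0 < ε) (hε : ε ≤ 1/2)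
    (hγ : γ = 1 - σk1 / σk)
    (hadm : ∀ ℓ, 1 ≤ ℓ → ℓ ≤ L →
      specNorm (G ℓ) ≤
        (1/32) * γ * σk * specNorm (Vᵀ * X (ℓ - 1)) + (ε/64) * γ * σk)
    (hinit : specNorm (Vᵀ * X 0) ≤ 1/4)
    (hL : 4 * Real.log (1/ε) ≤ γ * L) :
    specNorm (Vᵀ * X L) ≤ ε := by
  have hlog : 0 < Real.log (1 / ε) := Real.log_pos (by rw [lt_div_iff₀ hε0]; linarith)
  have hγ0 : 0 < γ := pos_of_mul_pos_left (by linarith) (Nat.cast_nonneg L)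
  have hγ1 : γ ≤ 1 := by rw [hγ]; linarith [div_nonneg hσ1 hσkpos.le]
  have hdV (j : Fin (n - k)) : |dV j| ≤ (1 - γ) * σk := by
    rw [hγ, sub_sub_cancel, div_mul_cancel₀ _ hσkpos.ne']
    exact hσk1 j
  have hVU : Vᵀ * U = 0 := by simpa [transpose_mul] using congrArg transpose hUV
  have hUA : Uᵀ * A = diagonal dU * Uᵀ :=
    hA ▸ transpose_mul_eq_diagonal_mul_transpose dU dV hU hUV
  have hVA : Vᵀ * A = diagonal dV * Vᵀ := by
    rw [hA, add_comm]; exact transpose_mul_eq_diagonal_mul_transpose dV dU hV hVU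
  obtain ⟨-, hfinal⟩ := specNorm_sq_mul_le_tanBound_of_noisy_iteration hfull hUA hVA hσkpos
    hγ0.le hγ1 hσk hdV hε0.le hε hX0
    (fun ℓ h1 h2 => ⟨(hiter ℓ h1 h2).1, (hiter ℓ h1 h2).2.2⟩) hadm hinit L le_rfl
  rw [tanBound_eq_of_log_inv_le (by linarith) hε0 hL] at hfinal
  exact le_of_sq_le_sq (by nlinarith [sq_nonneg (specNorm (Vᵀ * X L))]) hε0.le

/-- **Convergence of noisy subspace iteration under admissible noise.**
`A = U Λ_U Uᵀ + V Λ_V Vᵀ` is symmetric with `U, V` orthonormal bases of complementary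
subspaces, `σk` a lower bound on the absolute eigenvalues in `Λ_U` and `σk1` an upper
bound on those in `Λ_V`, and `γ = 1 − σ_{k+1}/σ_k`.  Noisy subspace iteration: for
`1 ≤ ℓ ≤ L`, `X ℓ` is an orthonormal basis for the column span of `A * X (ℓ-1) + G ℓ`.
If every `(X (ℓ-1), G ℓ)` is `(ε/2)`-admissible, i.e.
`‖G ℓ‖ ≤ (1/32) γ σ_k ‖Vᵀ X (ℓ-1)‖ + (ε/64) γ σ_k`, `‖Vᵀ X 0‖ ≤ 1/4` and `ε ≤ 1/2`,
then `‖Vᵀ X L‖ ≤ ε` for any `L ≥ 4 γ⁻¹ log(1/ε)`. -/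
theorem convergence_admissible_noise
    {n k : ℕ} (hkn : k ≤ n) (L : ℕ)
    (A : Matrix (Fin n) (Fin n) ℝ)
    (U : Matrix (Fin n) (Fin k) ℝ) (V : Matrix (Fin n) (Fin (n - k)) ℝ)
    (dU : Fin k → ℝ) (dV : Fin (n - k) → ℝ) (σk σk1 : ℝ)
    (hU : Uᵀ * U = 1) (hV : Vᵀ * V = 1) (hUV : Uᵀ * V = 0)
    (hfull : U * Uᵀ + V * Vᵀ = 1)
    (hA : A = U * Matrix.diagonal dU * Uᵀ + V * Matrix.diagonal dV * Vᵀ)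
    (hσk : ∀ i, σk ≤ |dU i|) (hσk1 : ∀ j, |dV j| ≤ σk1)
    (hσ1 : 0 ≤ σk1) (hσsep : σk1 ≤ σk) (hσkpos : 0 < σk)
    (X G : ℕ → Matrix (Fin n) (Fin k) ℝ)
    (hX0 : (X 0)ᵀ * X 0 = 1)
    (hiter : ∀ ℓ, 1 ≤ ℓ → ℓ ≤ L →
      (X ℓ)ᵀ * X ℓ = 1 ∧
      (∃ R : Matrix (Fin k) (Fin k) ℝ, A * X (ℓ - 1) + G ℓ = X ℓ * R) ∧
      (∃ C : Matrix (Fin k) (Fin k) ℝ, X ℓ = (A * X (ℓ - 1) + G ℓ) * C))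
    (ε γ : ℝ) (hε0 : 0 < ε) (hε : ε ≤ 1/2)
    (hγ : γ = 1 - σk1 / σk)
    (hadm : ∀ ℓ, 1 ≤ ℓ → ℓ ≤ L →
      specNorm (G ℓ) ≤
        (1/32) * γ * σk * specNorm (Vᵀ * X (ℓ - 1)) + (ε/64) * γ * σk)
    (hinit : specNorm (Vᵀ * X 0) ≤ 1/4)
    (hL : 4 * Real.log (1/ε) ≤ γ * L) :
    specNorm (Vᵀ * X L) ≤ ε :=
  convergence_admissible_noise_general L A U V dU dV σk σk1 hU hV hUV hfull hA hσk hσk1 hσ1 hσkpos X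
    G hX0 hiter ε γ hε0 hε hγ hadm hinit hL
end

section
/- (ρ-coherence of a projected Gaussian matrix.) There is an absolute constant C > 0 such that the following holds for all n ≥ 2 and k ≤ n. Let P be the orthogonal projection onto an (n−k)-dimensional subspace of ℝⁿ, and let H ∈ ℝ^{n×k} be a random matrix with i.i.d. entries distributed as N(0, 1/n). Then Pr{ ρ(PH) > C log n } ≤ 1/n⁵. -/
/-!
Each entry `(PH)ᵢⱼ = ∑ₗ Pᵢₗ Hₗⱼ` is a linear combination of independent `N(0, 1/n)` variables
whose coefficient vector has squared norm `∑ₗ Pᵢₗ² = Pᵢᵢ ≤ 1`, because `P` is a symmetric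
idempotent; hence it is sub-Gaussian with variance proxy `1/n`. If `ρ(PH) > 16 log n`, some entry
satisfies `(PH)ᵢⱼ² > 16 log n / n`, an event of probability at most `2 n⁻⁸` by the Chernoff bound,
and a union bound over the `nk ≤ n²` entries gives `2 n⁻⁶ ≤ n⁻⁵`.
-/

open Matrix MeasureTheory

/-- The `ρ`-coherence `ρ(G) = (n/k) max_i ‖e_iᵀ G‖²` of an `n × k` matrix. -/
noncomputable def rho {n k : ℕ} (G : Matrix (Fin n) (Fin k) ℝ) : ℝ :=
  ⨆ i : Fin n, ((n : ℝ) / (k : ℝ)) * ∑ j, (G i j)^2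

/-- The law of an `n × k` random matrix with i.i.d. `N(0, v)` entries, encoded as a
product of Gaussian measures on `(Fin n × Fin k) → ℝ`. -/
noncomputable def gaussMeasure (n k : ℕ) (v : ℝ) : Measure ((Fin n × Fin k) → ℝ) :=
  Measure.pi fun _ => ProbabilityTheory.gaussianReal 0 (Real.toNNReal v)

/-- The matrix built from a sample point of `gaussMeasure`. -/
def matOf {n k : ℕ} (ω : (Fin n × Fin k) → ℝ) : Matrix (Fin n) (Fin k) ℝ :=
  Matrix.of fun i j => ω (i, j)

namespace ProbabilityTheory

open Real
open scoped NNReal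

variable {Ω : Type*} {mΩ : MeasurableSpace Ω} {μ : Measure Ω} {X : Ω → ℝ} {c : ℝ≥0}

lemma HasSubgaussianMGF.mono (h : HasSubgaussianMGF X c μ) {d : ℝ≥0} (hcd : c ≤ d) :
    HasSubgaussianMGF X d μ where
  integrable_exp_mul := h.integrable_exp_mul
  mgf_le t := (h.mgf_le t).trans (exp_le_exp.2 (by gcongr))

lemma HasSubgaussianMGF.measureReal_abs_ge_le [IsFiniteMeasure μ]
    (h : HasSubgaussianMGF X c μ) {ε : ℝ} (hε : 0 ≤ ε) :
    μ.real {ω | ε ≤ |X ω|} ≤ 2 * exp (-ε ^ 2 / (2 * c)) := by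
  have hsplit : {ω | ε ≤ |X ω|} = {ω | ε ≤ X ω} ∪ {ω | ε ≤ (-X) ω} := by
    ext ω
    simp [le_abs', or_comm, le_neg]
  calc μ.real {ω | ε ≤ |X ω|}
      ≤ μ.real {ω | ε ≤ X ω} + μ.real {ω | ε ≤ (-X) ω} := hsplit ▸ measureReal_union_le _ _
    _ ≤ 2 * exp (-ε ^ 2 / (2 * c)) := by
      linarith [h.measure_ge_le hε, h.neg.measure_ge_le hε]

lemma hasSubgaussianMGF_id_gaussianReal (v : ℝ≥0) :
    HasSubgaussianMGF id v (gaussianReal 0 v) where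
  integrable_exp_mul := integrable_exp_mul_gaussianReal
  mgf_le t := by simp [mgf_id_gaussianReal]

lemma hasSubgaussianMGF_sum_mul_apply_pi_gaussianReal {ι κ : Type*} [Fintype ι] [Fintype κ]
    (v : ℝ≥0) {g : κ → ι} (hg : g.Injective) (a : κ → ℝ) :
    HasSubgaussianMGF (fun ω : ι → ℝ ↦ ∑ l, a l * ω (g l))
      ((∑ l, a l ^ 2).toNNReal * v) (Measure.pi fun _ ↦ gaussianReal 0 v) := by
  have hconst : (∑ l, a l ^ 2).toNNReal * v = ∑ l, ⟨a l ^ 2, sq_nonneg _⟩ * v := by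
    rw [Real.toNNReal_sum_of_nonneg fun l _ ↦ sq_nonneg (a l), Finset.sum_mul]
    exact Finset.sum_congr rfl fun l _ ↦ congrArg (· * v) (Real.toNNReal_of_nonneg (sq_nonneg _))
  rw [hconst]
  have hindep : iIndepFun (fun l (ω : ι → ℝ) ↦ a l * ω (g l))
      (Measure.pi fun _ ↦ gaussianReal 0 v) :=
    (((iIndepFun_pi (μ := fun _ ↦ gaussianReal 0 v) (X := fun _ x ↦ x)
      fun _ ↦ aemeasurable_id).precomp hg).comp (fun l (x : ℝ) ↦ a l * x)
      fun _ ↦ measurable_const_mul _ :)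
  refine HasSubgaussianMGF.sum_of_iIndepFun hindep fun l _ ↦ .const_mul ?_ (a l)
  refine HasSubgaussianMGF.of_map (X := id) (measurable_pi_apply (g l)).aemeasurable ?_
  rw [(measurePreserving_eval (fun _ ↦ gaussianReal 0 v) (g l)).map_eq]
  exact hasSubgaussianMGF_id_gaussianReal v

end ProbabilityTheory

namespace Matrix

variable {m : Type*} [Fintype m] {P : Matrix m m ℝ}

lemma sum_sq_apply_eq_diag (hsymm : P.IsSymm) (hidem : IsIdempotentElem P) (i : m) :
    ∑ l, P i l ^ 2 = P i i := by
  conv_rhs => rw [← hidem.eq, mul_apply]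
  refine Finset.sum_congr rfl fun l _ ↦ ?_
  rw [sq, hsymm.apply i l]

lemma sum_sq_apply_le_one (hsymm : P.IsSymm) (hidem : IsIdempotentElem P) (i : m) :
    ∑ l, P i l ^ 2 ≤ 1 := by
  have hdiag := sum_sq_apply_eq_diag hsymm hidem i
  have hle : P i i ^ 2 ≤ ∑ l, P i l ^ 2 :=
    Finset.single_le_sum (f := fun l ↦ P i l ^ 2) (fun _ _ ↦ sq_nonneg _) (Finset.mem_univ i)
  nlinarith

end Matrix

lemma exists_lt_sq_of_lt_rho {n k : ℕ} {G : Matrix (Fin n) (Fin k) ℝ} {s : ℝ} (hs : 0 ≤ s)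
    (h : s < rho G) : ∃ i j, s / n < G i j ^ 2 := by
  unfold rho at h
  have : Nonempty (Fin n) := by
    by_contra hempty
    rw [not_nonempty_iff] at hempty
    rw [Real.iSup_of_isEmpty] at h
    linarith
  obtain ⟨i, hi⟩ := exists_lt_of_lt_ciSup h
  have hn : (0 : ℝ) < n := by exact_mod_cast Fin.pos ‹Nonempty (Fin n)›.some
  have hk : (0 : ℝ) < k := by
    rcases Nat.eq_zero_or_pos k with rfl | hk
    · simp only [Nat.cast_zero, div_zero, zero_mul] at hi
      linarith
    · exact_mod_cast hk
  have hsum : ∑ _j : Fin k, s / n < ∑ j, G i j ^ 2 := by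
    rw [Finset.sum_const, Finset.card_univ, Fintype.card_fin, nsmul_eq_mul]
    calc k * (s / n) = k / n * s := by ring
      _ < k / n * (n / k * ∑ j, G i j ^ 2) := by gcongr
      _ = ∑ j, G i j ^ 2 := by field_simp
  obtain ⟨j, -, hj⟩ := Finset.exists_lt_of_sum_lt hsum
  exact ⟨i, j, hj⟩

section GaussianMatrix

open ProbabilityTheory Real
open scoped NNReal

instance (n k : ℕ) (v : ℝ) : IsProbabilityMeasure (gaussMeasure n k v) := by
  unfold gaussMeasure
  infer_instance

lemma hasSubgaussianMGF_mul_matOf_apply {m n k : ℕ} (M : Matrix (Fin m) (Fin n) ℝ) (v : ℝ≥0)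
    (i : Fin m) (j : Fin k) :
    HasSubgaussianMGF (fun ω : Fin n × Fin k → ℝ ↦ (M * matOf ω) i j)
      ((∑ l, M i l ^ 2).toNNReal * v) (Measure.pi fun _ ↦ gaussianReal 0 v) := by
  simpa [mul_apply, matOf] using
    hasSubgaussianMGF_sum_mul_apply_pi_gaussianReal v (Prod.mk_left_injective j) (M i ·)

lemma hasSubgaussianMGF_projection_mul_matOf_apply {n k : ℕ} {P : Matrix (Fin n) (Fin n) ℝ}
    (hsymm : P.IsSymm) (hidem : IsIdempotentElem P) (v : ℝ≥0) (i : Fin n) (j : Fin k) :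
    HasSubgaussianMGF (fun ω : Fin n × Fin k → ℝ ↦ (P * matOf ω) i j) v
      (Measure.pi fun _ ↦ gaussianReal 0 v) :=
  (hasSubgaussianMGF_mul_matOf_apply P v i j).mono <|
    mul_le_of_le_one_left v.2 (Real.toNNReal_le_one.2 (sum_sq_apply_le_one hsymm hidem i))

lemma gaussMeasure_lt_rho_projection_mul_matOf_le {n k : ℕ} {P : Matrix (Fin n) (Fin n) ℝ}
    (hsymm : P.IsSymm) (hidem : IsIdempotentElem P) {v s : ℝ} (hv : 0 ≤ v) (hs : 0 ≤ s) :
    gaussMeasure n k v {ω | s < rho (P * matOf ω)} ≤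
      ENNReal.ofReal (2 * n * k * exp (-s / (2 * n * v))) := by
  set μ := gaussMeasure n k v
  set ε := √(s / n)
  have hsub : {ω : Fin n × Fin k → ℝ | s < rho (P * matOf ω)} ⊆
      ⋃ i, ⋃ j, {ω | ε ≤ |(P * matOf ω) i j|} := by
    intro ω hω
    obtain ⟨i, j, hij⟩ := exists_lt_sq_of_lt_rho hs hω
    simp only [Set.mem_iUnion]
    exact ⟨i, j, (sqrt_le_sqrt hij.le).trans_eq (sqrt_sq_eq_abs _)⟩
  have htail : ∀ i j, μ.real {ω | ε ≤ |(P * matOf ω) i j|} ≤ 2 * exp (-s / (2 * n * v)) := by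
    intro i j
    have h := (hasSubgaussianMGF_projection_mul_matOf_apply hsymm hidem v.toNNReal i j
      ).measureReal_abs_ge_le (sqrt_nonneg (s / n))
    rwa [sq_sqrt (by positivity), coe_toNNReal _ hv, neg_div, div_div, ← neg_div,
      mul_left_comm, ← mul_assoc] at h
  calc μ {ω | s < rho (P * matOf ω)}
      ≤ μ (⋃ i, ⋃ j, {ω | ε ≤ |(P * matOf ω) i j|}) := measure_mono hsub
    _ = ENNReal.ofReal (μ.real (⋃ i, ⋃ j, {ω | ε ≤ |(P * matOf ω) i j|})) :=
      (ofReal_measureReal).symm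
    _ ≤ ENNReal.ofReal (∑ _i : Fin n, ∑ _j : Fin k, 2 * exp (-s / (2 * n * v))) := by
      refine ENNReal.ofReal_le_ofReal ((measureReal_iUnion_fintype_le _).trans ?_)
      exact Finset.sum_le_sum fun i _ ↦ (measureReal_iUnion_fintype_le _).trans
        (Finset.sum_le_sum fun j _ ↦ htail i j)
    _ = ENNReal.ofReal (2 * n * k * exp (-s / (2 * n * v))) := by
      simp only [Finset.sum_const, Finset.card_univ, Fintype.card_fin, nsmul_eq_mul]
      ring_nf

end GaussianMatrix

/-- **ρ-coherence of a projected Gaussian matrix.**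
There is an absolute constant `C > 0` such that for all `n ≥ 2`, `k ≤ n`, `P` the
orthogonal projection onto an `(n−k)`-dimensional subspace of ℝⁿ, and `H` a random
`n × k` matrix with i.i.d. `N(0, 1/n)` entries, `Pr{ ρ(PH) > C log n } ≤ 1/n⁵`. -/
theorem rho_projected_gaussian :
    ∃ C : ℝ, 0 < C ∧
      ∀ (n k : ℕ), 2 ≤ n → k ≤ n →
      ∀ P : Matrix (Fin n) (Fin n) ℝ, Pᵀ = P → P * P = P → P.rank = n - k →
        gaussMeasure n k (1 / (n : ℝ))
          {ω | C * Real.log n < rho (P * matOf ω)} ≤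
          ENNReal.ofReal (1 / (n : ℝ)^5) := by
  refine ⟨16, by norm_num, fun n k hn hk P hsymm hidem _ ↦ ?_⟩
  have hn : (2 : ℝ) ≤ n := by exact_mod_cast hn
  have hk : (k : ℝ) ≤ n := by exact_mod_cast hk
  have hexp : Real.exp (-(16 * Real.log n) / (2 * n * (1 / n))) = 1 / (n : ℝ) ^ 8 := by
    rw [show -(16 * Real.log n) / (2 * n * (1 / n)) = -Real.log ((n : ℝ) ^ 8) by
      rw [Real.log_pow]; field_simp; ring, Real.exp_neg, Real.exp_log (by positivity), one_div]
  refine (gaussMeasure_lt_rho_projection_mul_matOf_le hsymm hidem (by positivity)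
    (by positivity)).trans (ENNReal.ofReal_le_ofReal ?_)
  rw [hexp, mul_one_div, div_le_div_iff₀ (by positivity) (by positivity)]
  calc 2 * (n : ℝ) * k * (n : ℝ) ^ 5 ≤ 2 * (n : ℝ) * n * (n : ℝ) ^ 5 := by gcongr
    _ ≤ (n : ℝ) * n * n * (n : ℝ) ^ 5 := by gcongr
    _ = 1 * n ^ 8 := by ring
end

section
/- (Coherence of a subspace is controlled by any containing subspace.) Let X ∈ ℝ^{n×k} and Y ∈ ℝ^{n×k'} be orthonormal matrices such that the column span of X is contained in the column span of Y. Then μ(X) ≤ (k'/k) μ(Y). -/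
/-! Write `X = Y C`. Orthonormality of `X` and `Y` gives `Cᵀ C = 1`, so `v ↦ C Cᵀ v` is an
orthogonal projection and, by Pythagoras, `‖Cᵀ v‖ ≤ ‖v‖`. Applied to the rows of `Y`, every row
of `X` is at most as long as the corresponding row of `Y`; the factor `k'/k` only converts the
normalisation `n/k` of `μ(X)` into the normalisation `n/k'` of `μ(Y)`. -/

open Matrix

/-- The coherence `μ(X) = max_i (n/m) ‖e_iᵀ X‖²` of an `n × m` matrix. -/
noncomputable def coher {n : ℕ} {m : Type*} [Fintype m] (X : Matrix (Fin n) m ℝ) : ℝ :=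
  ⨆ i : Fin n, ((n : ℝ) / (Fintype.card m)) * ∑ j, (X i j)^2

namespace Matrix

theorem transpose_mul_self_eq_one_of_mul {R n m k : Type*} [CommRing R] [Fintype n] [Fintype m]
    [DecidableEq m] [DecidableEq k]
    {Y : Matrix n m R} {C : Matrix m k R} (hY : Yᵀ * Y = 1) (hYC : (Y * C)ᵀ * (Y * C) = 1) :
    Cᵀ * C = 1 := by
  rwa [transpose_mul, Matrix.mul_assoc, ← Matrix.mul_assoc Yᵀ, hY, Matrix.one_mul] at hYC

variable {m k : Type*} [Fintype m] [Fintype k] [DecidableEq k]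

theorem dotProduct_vecMul_self_le {C : Matrix m k ℝ} (hC : Cᵀ * C = 1) (v : m → ℝ) :
    (v ᵥ* C) ⬝ᵥ (v ᵥ* C) ≤ v ⬝ᵥ v := by
  set w := v ᵥ* C
  -- `C *ᵥ w` is the orthogonal projection of `v` onto the column span of `C`.
  have hnorm : (C *ᵥ w) ⬝ᵥ (C *ᵥ w) = w ⬝ᵥ w := by
    rw [dotProduct_mulVec, ← vecMul_transpose, vecMul_vecMul, hC, vecMul_one]
  have hinner : v ⬝ᵥ (C *ᵥ w) = w ⬝ᵥ w := dotProduct_mulVec v C w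
  have hpyth : v ⬝ᵥ v - w ⬝ᵥ w = (v - C *ᵥ w) ⬝ᵥ (v - C *ᵥ w) := by
    rw [sub_dotProduct, dotProduct_sub, dotProduct_sub, hnorm, dotProduct_comm (C *ᵥ w), hinner]
    ring
  have hres : 0 ≤ (v - C *ᵥ w) ⬝ᵥ (v - C *ᵥ w) := by
    simpa only [star_trivial] using dotProduct_self_star_nonneg (v - C *ᵥ w)
  linarith

theorem sum_sq_mul_apply_le {n : Type*} {C : Matrix m k ℝ} (hC : Cᵀ * C = 1)
    (Y : Matrix n m ℝ) (i : n) : ∑ j, ((Y * C) i j) ^ 2 ≤ ∑ l, (Y i l) ^ 2 := by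
  have hrow : (Y * C) i = Y i ᵥ* C := rfl
  simpa only [hrow, dotProduct, ← sq] using dotProduct_vecMul_self_le hC (Y i)

end Matrix

section Coherence

variable {n : ℕ} {m : Type*} [Fintype m]

theorem coher_nonneg (X : Matrix (Fin n) m ℝ) : 0 ≤ coher X :=
  Real.iSup_nonneg fun _ => by positivity

theorem le_coher (X : Matrix (Fin n) m ℝ) (i : Fin n) :
    (n : ℝ) / Fintype.card m * ∑ j, (X i j) ^ 2 ≤ coher X :=
  le_ciSup (f := fun i => (n : ℝ) / Fintype.card m * ∑ j, (X i j) ^ 2)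
    (Set.finite_range _).bddAbove i

theorem coher_le {X : Matrix (Fin n) m ℝ} {c : ℝ} (hc : 0 ≤ c)
    (h : ∀ i, (n : ℝ) / Fintype.card m * ∑ j, (X i j) ^ 2 ≤ c) : coher X ≤ c :=
  Real.iSup_le h hc

end Coherence

/-- **Coherence of a subspace is controlled by any containing subspace.**
If `X ∈ ℝ^{n×k}` and `Y ∈ ℝ^{n×k'}` are orthonormal and the column span of `X` is
contained in the column span of `Y`, then `μ(X) ≤ (k'/k) μ(Y)`. -/
theorem coherence_mono_of_subspace
    {n k k' : ℕ}
    (X : Matrix (Fin n) (Fin k) ℝ) (Y : Matrix (Fin n) (Fin k') ℝ)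
    (hX : Xᵀ * X = 1) (hY : Yᵀ * Y = 1)
    (hsub : ∃ C : Matrix (Fin k') (Fin k) ℝ, X = Y * C) :
    coher X ≤ ((k' : ℝ) / (k : ℝ)) * coher Y := by
  obtain ⟨C, rfl⟩ := hsub
  have hC := transpose_mul_self_eq_one_of_mul hY hX
  refine coher_le (by have := coher_nonneg Y; positivity) fun i => ?_
  have hYi := le_coher Y i
  simp only [Fintype.card_fin] at hYi ⊢
  calc (n : ℝ) / k * ∑ j, ((Y * C) i j) ^ 2 ≤ n / k * ∑ l, (Y i l) ^ 2 := by
        gcongr; exact sum_sq_mul_apply_le hC Y i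
    _ = k' / k * (n / k' * ∑ l, (Y i l) ^ 2) := by
        obtain rfl | hk' := eq_or_ne k' 0
        · simp -- the rows of `Y` are empty
        · field_simp
    _ ≤ k' / k * coher Y := by gcongr
end
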